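/- For all p, q ∈ (0,1) with p ≠ q and all self-similar measures μ_p and μ_q, the infimum over all couplings γ of μ_p and μ_q of the second moment ∫ |x−y|² dγ(x,y) satisfies ((t₂−t₁)/(1−c))² (p−q)² ≤ inf_γ ∫ |x−y|² dγ(x,y) ≤ ((t₂−t₁)/(1−c))² · (2c(p−q)² + (1−c)|p−q|)/(1+c); equivalently, the second Wasserstein distance W₂(μ_p, μ_q) satisfies ((t₂−t₁)/(1−c))|p−q| ≤ W₂(μ_p, μ_q) ≤ ((t₂−t₁)/(1−c)) √((2c(p−q)² + (1−c)|p−q|)/(1+c)). -/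

import Mathlib

open MeasureTheory

/-- The infimum over couplings of μ and ν of the second moment ∫ |x − y|² dγ. -/
noncomputable def secondMomentInf (μ ν : Measure ℝ) : ℝ :=
  sInf { a : ℝ | ∃ γ : Measure (ℝ × ℝ), IsProbabilityMeasure γ ∧
    γ.map Prod.fst = μ ∧ γ.map Prod.snd = ν ∧ a = ∫ z : ℝ × ℝ, |z.1 - z.2|^2 ∂γ }

/-- The second Wasserstein distance. -/
noncomputable def wasserstein2 (μ ν : Measure ℝ) : ℝ :=
  Real.sqrt (secondMomentInf μ ν)

/-!
The mean `m_r` of `μ_r` satisfies `m_r = r (c m_r + t₁) + (1 - r) (c m_r + t₂)`, so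
`m_p - m_q = (p - q) (t₁ - t₂) / (1 - c)`. The lower bound is Jensen's inequality
`(∫ (x - y) dγ)² ≤ ∫ (x - y)² dγ` for every coupling `γ`.

For the upper bound let `q ≤ p`. Any coupling `γ` of `μ_p` and `μ_q` yields another one: push `γ`
forward by `S₁ × S₁` with weight `q`, by `S₂ × S₂` with weight `1 - p` and by `S₁ × S₂` with
weight `p - q`. Its cost is `c² · cost γ + K` with `K` depending only on `m_p - m_q`, so the
infimum `s` of the costs satisfies `s ≤ c² s + K`, i.e. `s ≤ K / (1 - c²)`.
-/

open ProbabilityTheory Set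

lemma one_sub_mul_csInf_le_of_affine_mem {S : Set ℝ} (hne : S.Nonempty) (hbdd : BddBelow S)
    {l K : ℝ} (hl : 0 < l) (hS : ∀ a ∈ S, l * a + K ∈ S) : (1 - l) * sInf S ≤ K := by
  have h : (sInf S - K) / l ≤ sInf S := le_csInf hne fun a ha => by
    rw [div_le_iff₀ hl]
    linarith [csInf_le hbdd (hS a ha)]
  rw [div_le_iff₀ hl] at h
  linarith

lemma integral_sq_affine {Ω : Type*} [MeasurableSpace Ω] {γ : Measure Ω}
    [IsProbabilityMeasure γ] {X : Ω → ℝ} (hX : MemLp X 2 γ) (a b : ℝ) :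
    ∫ ω, (a * X ω + b) ^ 2 ∂γ = a ^ 2 * ∫ ω, X ω ^ 2 ∂γ + 2 * a * b * ∫ ω, X ω ∂γ + b ^ 2 := by
  have hX1 : Integrable X γ := hX.integrable one_le_two
  have hX2 : Integrable (fun ω => X ω ^ 2) γ := hX.integrable_sq
  have hsum : Integrable (fun ω => a ^ 2 * X ω ^ 2 + 2 * a * b * X ω) γ :=
    (hX2.const_mul _).add (hX1.const_mul _)
  calc ∫ ω, (a * X ω + b) ^ 2 ∂γ
      = ∫ ω, (a ^ 2 * X ω ^ 2 + 2 * a * b * X ω) + b ^ 2 ∂γ := by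
        congr 1 with ω
        ring
    _ = _ := by
        rw [integral_add hsum (integrable_const _), integral_add (hX2.const_mul _)
          (hX1.const_mul _), integral_const_mul, integral_const_mul, integral_const,
          probReal_univ, one_smul]

section SelfSimilar

variable {μ : Measure ℝ}

lemma memLp_id_of_ae_mem_Icc [IsFiniteMeasure μ] (hμ : μ (Icc (0 : ℝ) 1)ᶜ = 0) :
    MemLp (fun x : ℝ => x) 2 μ := by
  refine MemLp.of_bound aestronglyMeasurable_id 1 ?_
  filter_upwards [mem_ae_iff.mpr hμ] with x hx
  rw [Real.norm_eq_abs, abs_le]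
  exact ⟨by linarith [hx.1], hx.2⟩

lemma integral_id_map_affine [IsProbabilityMeasure μ] (hμ : Integrable (fun x : ℝ => x) μ)
    (c t : ℝ) : ∫ x, x ∂(μ.map fun x => c * x + t) = c * ∫ x, x ∂μ + t := by
  rw [integral_map (by fun_prop) measurable_id'.aestronglyMeasurable, integral_add (hμ.const_mul c)
    (integrable_const t), integral_const_mul]
  simp

lemma integrable_id_map_affine [IsFiniteMeasure μ] (hμ : Integrable (fun x : ℝ => x) μ) (c t : ℝ) :
    Integrable (fun x : ℝ => x) (μ.map fun x => c * x + t) := by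
  rw [integrable_map_measure measurable_id'.aestronglyMeasurable (by fun_prop)]
  exact (hμ.const_mul c).add (integrable_const t)

lemma one_sub_mul_integral_id_of_selfSimilar [IsProbabilityMeasure μ]
    (hμ : Integrable (fun x : ℝ => x) μ) {c t₁ t₂ r : ℝ} (hr₀ : 0 ≤ r) (hr₁ : r ≤ 1)
    (hss : μ = ENNReal.ofReal r • μ.map (fun x : ℝ => c * x + t₁)
      + ENNReal.ofReal (1 - r) • μ.map (fun x : ℝ => c * x + t₂)) :
    (1 - c) * ∫ x, x ∂μ = r * t₁ + (1 - r) * t₂ := by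
  have h : ∫ x, x ∂μ = r * (c * ∫ x, x ∂μ + t₁) + (1 - r) * (c * ∫ x, x ∂μ + t₂) := by
    conv_lhs => rw [hss]
    rw [integral_add_measure
      ((integrable_id_map_affine hμ c t₁).smul_measure ENNReal.ofReal_ne_top)
      ((integrable_id_map_affine hμ c t₂).smul_measure ENNReal.ofReal_ne_top),
      integral_smul_measure, integral_smul_measure, ENNReal.toReal_ofReal hr₀,
      ENNReal.toReal_ofReal (sub_nonneg.mpr hr₁), integral_id_map_affine hμ,
      integral_id_map_affine hμ, smul_eq_mul, smul_eq_mul]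
  linarith

end SelfSimilar

section Coupling

variable {μ ν : Measure ℝ} {γ : Measure (ℝ × ℝ)}

def couplingCosts (μ ν : Measure ℝ) : Set ℝ :=
  { a : ℝ | ∃ γ : Measure (ℝ × ℝ), IsProbabilityMeasure γ ∧
    γ.map Prod.fst = μ ∧ γ.map Prod.snd = ν ∧ a = ∫ z : ℝ × ℝ, |z.1 - z.2|^2 ∂γ }

lemma secondMomentInf_eq_sInf_couplingCosts (μ ν : Measure ℝ) :
    secondMomentInf μ ν = sInf (couplingCosts μ ν) := rfl

lemma couplingCosts_nonempty [IsProbabilityMeasure μ] [IsProbabilityMeasure ν] :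
    (couplingCosts μ ν).Nonempty :=
  ⟨_, μ.prod ν, inferInstance, by simp, by simp, rfl⟩

lemma bddBelow_couplingCosts (μ ν : Measure ℝ) : BddBelow (couplingCosts μ ν) := by
  refine ⟨0, ?_⟩
  rintro a ⟨γ, -, -, -, rfl⟩
  exact integral_nonneg fun z => by positivity

lemma couplingCosts_subset_swap (μ ν : Measure ℝ) : couplingCosts μ ν ⊆ couplingCosts ν μ := by
  rintro a ⟨γ, hγ, h1, h2, rfl⟩
  refine ⟨γ.map Prod.swap, Measure.isProbabilityMeasure_map measurable_swap.aemeasurable,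
    ?_, ?_, ?_⟩
  · rwa [Measure.map_map measurable_fst measurable_swap]
  · rwa [Measure.map_map measurable_snd measurable_swap]
  · rw [integral_map measurable_swap.aemeasurable (by fun_prop)]
    simp only [Prod.fst_swap, Prod.snd_swap, abs_sub_comm]

lemma secondMomentInf_comm (μ ν : Measure ℝ) : secondMomentInf μ ν = secondMomentInf ν μ := by
  rw [secondMomentInf_eq_sInf_couplingCosts, secondMomentInf_eq_sInf_couplingCosts,
    (couplingCosts_subset_swap μ ν).antisymm (couplingCosts_subset_swap ν μ)]

lemma memLp_fst_sub_snd (hμ : MemLp (fun x : ℝ => x) 2 μ) (hν : MemLp (fun x : ℝ => x) 2 ν)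
    (h1 : γ.map Prod.fst = μ) (h2 : γ.map Prod.snd = ν) :
    MemLp (fun z : ℝ × ℝ => z.1 - z.2) 2 γ := by
  subst h1 h2
  exact ((memLp_map_measure_iff measurable_id'.aestronglyMeasurable
    measurable_fst.aemeasurable).1 hμ).sub
    ((memLp_map_measure_iff measurable_id'.aestronglyMeasurable
      measurable_snd.aemeasurable).1 hν)

lemma integral_fst_sub_snd (hμ : Integrable (fun x : ℝ => x) μ)
    (hν : Integrable (fun x : ℝ => x) ν) (h1 : γ.map Prod.fst = μ) (h2 : γ.map Prod.snd = ν) :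
    ∫ z, z.1 - z.2 ∂γ = ∫ x, x ∂μ - ∫ x, x ∂ν := by
  subst h1 h2
  have hfst : Integrable (fun z : ℝ × ℝ => z.1) γ :=
    (integrable_map_measure measurable_id'.aestronglyMeasurable measurable_fst.aemeasurable).1 hμ
  have hsnd : Integrable (fun z : ℝ × ℝ => z.2) γ :=
    (integrable_map_measure measurable_id'.aestronglyMeasurable measurable_snd.aemeasurable).1 hν
  rw [integral_sub hfst hsnd,
    integral_map measurable_fst.aemeasurable measurable_id'.aestronglyMeasurable,
    integral_map measurable_snd.aemeasurable measurable_id'.aestronglyMeasurable]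

lemma sq_integral_sub_le_of_mem_couplingCosts [IsFiniteMeasure μ] [IsFiniteMeasure ν]
    (hμ : MemLp (fun x : ℝ => x) 2 μ) (hν : MemLp (fun x : ℝ => x) 2 ν) {a : ℝ} (ha : a ∈ couplingCosts μ ν) :
    (∫ x, x ∂μ - ∫ x, x ∂ν) ^ 2 ≤ a := by
  obtain ⟨γ, hγ, h1, h2, rfl⟩ := ha
  have hX := memLp_fst_sub_snd hμ hν h1 h2
  have hvar := variance_nonneg (fun z : ℝ × ℝ => z.1 - z.2) γ
  rw [variance_eq_sub hX, integral_fst_sub_snd (hμ.integrable one_le_two)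
    (hν.integrable one_le_two) h1 h2] at hvar
  simp only [sq_abs]
  simpa only [Pi.pow_apply, sub_nonneg] using hvar

lemma sq_integral_sub_le_secondMomentInf [IsProbabilityMeasure μ] [IsProbabilityMeasure ν]
    (hμ : MemLp (fun x : ℝ => x) 2 μ) (hν : MemLp (fun x : ℝ => x) 2 ν) :
    (∫ x, x ∂μ - ∫ x, x ∂ν) ^ 2 ≤ secondMomentInf μ ν :=
  le_csInf couplingCosts_nonempty fun _ ha => sq_integral_sub_le_of_mem_couplingCosts hμ hν ha

end Coupling

section SelfSimilarCoupling

variable {γ : Measure (ℝ × ℝ)}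

lemma map_fst_map_prodMap {f g : ℝ → ℝ} (hf : Measurable f) (hg : Measurable g) :
    (γ.map (Prod.map f g)).map Prod.fst = (γ.map Prod.fst).map f := by
  rw [Measure.map_map measurable_fst (hf.prodMap hg), Measure.map_map hf measurable_fst]
  rfl

lemma map_snd_map_prodMap {f g : ℝ → ℝ} (hf : Measurable f) (hg : Measurable g) :
    (γ.map (Prod.map f g)).map Prod.snd = (γ.map Prod.snd).map g := by
  rw [Measure.map_map measurable_snd (hf.prodMap hg), Measure.map_map hg measurable_snd]
  rfl

lemma integrable_sq_sub_map_prodMap_affine [IsProbabilityMeasure γ]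
    (hX : MemLp (fun z : ℝ × ℝ => z.1 - z.2) 2 γ) (c t t' : ℝ) :
    Integrable (fun z : ℝ × ℝ => (z.1 - z.2) ^ 2)
      (γ.map (Prod.map (fun x => c * x + t) (fun x => c * x + t'))) := by
  rw [integrable_map_measure (by fun_prop) (by fun_prop)]
  refine ((hX.const_mul c).add (memLp_const (t - t'))).integrable_sq.congr
    (ae_of_all _ fun z => ?_)
  simp only [Pi.add_apply, Function.comp_apply, Prod.map_fst, Prod.map_snd]
  ring

lemma integral_sq_sub_map_prodMap_affine [IsProbabilityMeasure γ]
    (hX : MemLp (fun z : ℝ × ℝ => z.1 - z.2) 2 γ) (c t t' : ℝ) :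
    ∫ z, (z.1 - z.2) ^ 2 ∂(γ.map (Prod.map (fun x => c * x + t) (fun x => c * x + t')))
      = c ^ 2 * ∫ z, (z.1 - z.2) ^ 2 ∂γ + 2 * c * (t - t') * ∫ z, z.1 - z.2 ∂γ
        + (t - t') ^ 2 := by
  rw [integral_map (by fun_prop) (by fun_prop), ← integral_sq_affine hX c (t - t')]
  congr 1 with z
  simp only [Prod.map_fst, Prod.map_snd]
  ring

noncomputable def selfSimilarCoupling (c t₁ t₂ p q : ℝ) (γ : Measure (ℝ × ℝ)) :
    Measure (ℝ × ℝ) :=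
  ENNReal.ofReal q • γ.map (Prod.map (fun x => c * x + t₁) (fun x => c * x + t₁))
    + ENNReal.ofReal (1 - p) • γ.map (Prod.map (fun x => c * x + t₂) (fun x => c * x + t₂))
    + ENNReal.ofReal (p - q) • γ.map (Prod.map (fun x => c * x + t₁) (fun x => c * x + t₂))

variable {c t₁ t₂ p q : ℝ}

lemma isProbabilityMeasure_selfSimilarCoupling [IsProbabilityMeasure γ] (hq : 0 ≤ q)
    (hqp : q ≤ p) (hp : p ≤ 1) : IsProbabilityMeasure (selfSimilarCoupling c t₁ t₂ p q γ) := by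
  have hφ : ∀ t t' : ℝ, Measurable (Prod.map (fun x : ℝ => c * x + t) (fun x => c * x + t')) :=
    fun t t' => by fun_prop
  constructor
  simp only [selfSimilarCoupling, Measure.add_apply, Measure.smul_apply,
    Measure.map_apply (hφ _ _) MeasurableSet.univ, Set.preimage_univ, measure_univ,
    smul_eq_mul, mul_one]
  rw [← ENNReal.ofReal_add hq (by linarith), ← ENNReal.ofReal_add (by linarith) (by linarith),
    show q + (1 - p) + (p - q) = 1 by ring, ENNReal.ofReal_one]

lemma map_fst_selfSimilarCoupling {μ : Measure ℝ} (h1 : γ.map Prod.fst = μ)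
    (hss : μ = ENNReal.ofReal p • μ.map (fun x : ℝ => c * x + t₁)
      + ENNReal.ofReal (1 - p) • μ.map (fun x : ℝ => c * x + t₂)) (hq : 0 ≤ q) (hqp : q ≤ p) :
    (selfSimilarCoupling c t₁ t₂ p q γ).map Prod.fst = μ := by
  have hS : ∀ t : ℝ, Measurable fun x : ℝ => c * x + t := fun t => by fun_prop
  simp only [selfSimilarCoupling, Measure.map_add _ _ measurable_fst, Measure.map_smul,
    map_fst_map_prodMap (hS _) (hS _), h1]
  rw [add_right_comm, ← add_smul, ← ENNReal.ofReal_add hq (sub_nonneg.mpr hqp), add_sub_cancel]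
  exact hss.symm

lemma map_snd_selfSimilarCoupling {ν : Measure ℝ} (h2 : γ.map Prod.snd = ν)
    (hss : ν = ENNReal.ofReal q • ν.map (fun x : ℝ => c * x + t₁)
      + ENNReal.ofReal (1 - q) • ν.map (fun x : ℝ => c * x + t₂)) (hqp : q ≤ p) (hp : p ≤ 1) :
    (selfSimilarCoupling c t₁ t₂ p q γ).map Prod.snd = ν := by
  have hS : ∀ t : ℝ, Measurable fun x : ℝ => c * x + t := fun t => by fun_prop
  simp only [selfSimilarCoupling, Measure.map_add _ _ measurable_snd, Measure.map_smul,
    map_snd_map_prodMap (hS _) (hS _), h2]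
  rw [add_assoc, ← add_smul, ← ENNReal.ofReal_add (sub_nonneg.mpr hp) (sub_nonneg.mpr hqp),
    sub_add_sub_cancel]
  exact hss.symm

lemma integral_sq_sub_selfSimilarCoupling [IsProbabilityMeasure γ]
    (hX : MemLp (fun z : ℝ × ℝ => z.1 - z.2) 2 γ) (hq : 0 ≤ q) (hqp : q ≤ p) (hp : p ≤ 1) :
    ∫ z, (z.1 - z.2) ^ 2 ∂(selfSimilarCoupling c t₁ t₂ p q γ)
      = c ^ 2 * ∫ z, (z.1 - z.2) ^ 2 ∂γ
        + (p - q) * ((t₂ - t₁) ^ 2 - 2 * c * (t₂ - t₁) * ∫ z, z.1 - z.2 ∂γ) := by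
  have hi₁₁ := integrable_sq_sub_map_prodMap_affine hX c t₁ t₁
  have hi₂₂ := integrable_sq_sub_map_prodMap_affine hX c t₂ t₂
  have hi₁₂ := integrable_sq_sub_map_prodMap_affine hX c t₁ t₂
  rw [selfSimilarCoupling,
    integral_add_measure ((hi₁₁.smul_measure ENNReal.ofReal_ne_top).add_measure
      (hi₂₂.smul_measure ENNReal.ofReal_ne_top)) (hi₁₂.smul_measure ENNReal.ofReal_ne_top),
    integral_add_measure (hi₁₁.smul_measure ENNReal.ofReal_ne_top)
      (hi₂₂.smul_measure ENNReal.ofReal_ne_top),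
    integral_smul_measure, integral_smul_measure, integral_smul_measure,
    integral_sq_sub_map_prodMap_affine hX, integral_sq_sub_map_prodMap_affine hX,
    integral_sq_sub_map_prodMap_affine hX,
    ENNReal.toReal_ofReal hq, ENNReal.toReal_ofReal (sub_nonneg.mpr hp),
    ENNReal.toReal_ofReal (sub_nonneg.mpr hqp)]
  simp only [smul_eq_mul]
  ring

end SelfSimilarCoupling

section Bounds

variable {c t₁ t₂ p q : ℝ} {μp μq : Measure ℝ}

lemma integral_sub_integral_of_selfSimilar [IsProbabilityMeasure μp] [IsProbabilityMeasure μq]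
    (hc : c < 1) (hμp : Integrable (fun x : ℝ => x) μp) (hμq : Integrable (fun x : ℝ => x) μq)
    (hp : p ∈ Icc (0 : ℝ) 1) (hq : q ∈ Icc (0 : ℝ) 1)
    (hssp : μp = ENNReal.ofReal p • μp.map (fun x : ℝ => c * x + t₁)
      + ENNReal.ofReal (1 - p) • μp.map (fun x : ℝ => c * x + t₂))
    (hssq : μq = ENNReal.ofReal q • μq.map (fun x : ℝ => c * x + t₁)
      + ENNReal.ofReal (1 - q) • μq.map (fun x : ℝ => c * x + t₂)) :
    ∫ x, x ∂μp - ∫ x, x ∂μq = (p - q) * (t₁ - t₂) / (1 - c) := by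
  have hmp := one_sub_mul_integral_id_of_selfSimilar hμp hp.1 hp.2 hssp
  have hmq := one_sub_mul_integral_id_of_selfSimilar hμq hq.1 hq.2 hssq
  rw [eq_div_iff (sub_ne_zero.mpr hc.ne')]
  linear_combination hmp - hmq

lemma affine_mem_couplingCosts [IsFiniteMeasure μp] [IsFiniteMeasure μq]
    (hq : 0 ≤ q) (hqp : q ≤ p) (hp : p ≤ 1)
    (hμp : MemLp (fun x : ℝ => x) 2 μp) (hμq : MemLp (fun x : ℝ => x) 2 μq)
    (hssp : μp = ENNReal.ofReal p • μp.map (fun x : ℝ => c * x + t₁)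
      + ENNReal.ofReal (1 - p) • μp.map (fun x : ℝ => c * x + t₂))
    (hssq : μq = ENNReal.ofReal q • μq.map (fun x : ℝ => c * x + t₁)
      + ENNReal.ofReal (1 - q) • μq.map (fun x : ℝ => c * x + t₂))
    {a : ℝ} (ha : a ∈ couplingCosts μp μq) :
    c ^ 2 * a + (p - q) * ((t₂ - t₁) ^ 2 - 2 * c * (t₂ - t₁) * (∫ x, x ∂μp - ∫ x, x ∂μq))
      ∈ couplingCosts μp μq := by
  obtain ⟨γ, hγ, h1, h2, rfl⟩ := ha
  refine ⟨selfSimilarCoupling c t₁ t₂ p q γ, isProbabilityMeasure_selfSimilarCoupling hq hqp hp,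
    map_fst_selfSimilarCoupling h1 hssp hq hqp, map_snd_selfSimilarCoupling h2 hssq hqp hp, ?_⟩
  simp only [sq_abs]
  rw [integral_sq_sub_selfSimilarCoupling (memLp_fst_sub_snd hμp hμq h1 h2) hq hqp hp,
    integral_fst_sub_snd (hμp.integrable one_le_two) (hμq.integrable one_le_two) h1 h2]

lemma secondMomentInf_le_of_le [IsProbabilityMeasure μp] [IsProbabilityMeasure μq]
    (hc₀ : 0 < c) (hc₁ : c < 1) (hq : 0 ≤ q) (hqp : q ≤ p) (hp : p ≤ 1)
    (hμp : MemLp (fun x : ℝ => x) 2 μp) (hμq : MemLp (fun x : ℝ => x) 2 μq)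
    (hssp : μp = ENNReal.ofReal p • μp.map (fun x : ℝ => c * x + t₁)
      + ENNReal.ofReal (1 - p) • μp.map (fun x : ℝ => c * x + t₂))
    (hssq : μq = ENNReal.ofReal q • μq.map (fun x : ℝ => c * x + t₁)
      + ENNReal.ofReal (1 - q) • μq.map (fun x : ℝ => c * x + t₂)) :
    secondMomentInf μp μq
      ≤ ((t₂ - t₁) / (1 - c)) ^ 2 * ((2 * c * (p - q) ^ 2 + (1 - c) * (p - q)) / (1 + c)) := by
  have h := one_sub_mul_csInf_le_of_affine_mem couplingCosts_nonempty
    (bddBelow_couplingCosts μp μq) (pow_pos hc₀ 2)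
    fun a ha => affine_mem_couplingCosts hq hqp hp hμp hμq hssp hssq ha
  rw [integral_sub_integral_of_selfSimilar hc₁ (hμp.integrable one_le_two)
    (hμq.integrable one_le_two) ⟨hq.trans hqp, hp⟩ ⟨hq, hqp.trans hp⟩ hssp hssq] at h
  rw [secondMomentInf_eq_sInf_couplingCosts]
  have h1c : 0 < 1 - c := sub_pos.mpr hc₁
  refine le_of_mul_le_mul_left (h.trans_eq ?_) (by nlinarith : (0 : ℝ) < 1 - c ^ 2)
  field_simp
  ring

end Bounds

theorem wasserstein2_bounds_general
    (c t₁ t₂ : ℝ) (hc : c ∈ Set.Ioc (0:ℝ) (1/2))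
    (ht₂ : t₂ ∈ Set.Icc (t₁ + c) (1 - c))
    (p q : ℝ) (hp : p ∈ Set.Ioo (0:ℝ) 1) (hq : q ∈ Set.Ioo (0:ℝ) 1)
    (μp : Measure ℝ) (hμp : IsProbabilityMeasure μp)
    (hsuppp : μp ((Set.Icc (0:ℝ) 1)ᶜ) = 0)
    (hssp : μp = ENNReal.ofReal p • μp.map (fun x : ℝ => c * x + t₁)
               + ENNReal.ofReal (1 - p) • μp.map (fun x : ℝ => c * x + t₂))
    (μq : Measure ℝ) (hμq : IsProbabilityMeasure μq)
    (hsuppq : μq ((Set.Icc (0:ℝ) 1)ᶜ) = 0)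
    (hssq : μq = ENNReal.ofReal q • μq.map (fun x : ℝ => c * x + t₁)
               + ENNReal.ofReal (1 - q) • μq.map (fun x : ℝ => c * x + t₂)) :
    (((t₂ - t₁) / (1 - c))^2 * (p - q)^2 ≤ secondMomentInf μp μq ∧
      secondMomentInf μp μq
        ≤ ((t₂ - t₁) / (1 - c))^2 * ((2 * c * (p - q)^2 + (1 - c) * |p - q|) / (1 + c))) ∧
    ((t₂ - t₁) / (1 - c) * |p - q| ≤ wasserstein2 μp μq ∧
      wasserstein2 μp μq
        ≤ (t₂ - t₁) / (1 - c) *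
            Real.sqrt ((2 * c * (p - q)^2 + (1 - c) * |p - q|) / (1 + c))) := by
  obtain ⟨hc₀, hc₂⟩ := hc
  have hc₁ : c < 1 := by linarith
  have hD : 0 ≤ (t₂ - t₁) / (1 - c) := div_nonneg (by linarith [ht₂.1]) (by linarith)
  have hLp := memLp_id_of_ae_mem_Icc hsuppp
  have hLq := memLp_id_of_ae_mem_Icc hsuppq
  have hlow : ((t₂ - t₁) / (1 - c)) ^ 2 * (p - q) ^ 2 ≤ secondMomentInf μp μq := by
    refine le_of_eq_of_le ?_ (sq_integral_sub_le_secondMomentInf hLp hLq)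
    rw [integral_sub_integral_of_selfSimilar hc₁ (hLp.integrable one_le_two)
      (hLq.integrable one_le_two) (Ioo_subset_Icc_self hp) (Ioo_subset_Icc_self hq) hssp hssq]
    ring
  have hup : secondMomentInf μp μq
      ≤ ((t₂ - t₁) / (1 - c)) ^ 2 * ((2 * c * (p - q) ^ 2 + (1 - c) * |p - q|) / (1 + c)) := by
    rcases le_total q p with hqp | hpq
    · rw [abs_of_nonneg (sub_nonneg.mpr hqp)]
      exact secondMomentInf_le_of_le hc₀ hc₁ hq.1.le hqp hp.2.le hLp hLq hssp hssq
    · rw [secondMomentInf_comm, abs_sub_comm, abs_of_nonneg (sub_nonneg.mpr hpq), ← neg_sub q p,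
        neg_sq]
      exact secondMomentInf_le_of_le hc₀ hc₁ hp.1.le hpq hq.2.le hLq hLp hssq hssp
  refine ⟨⟨hlow, hup⟩, Real.le_sqrt_of_sq_le (by rwa [mul_pow, sq_abs]), ?_⟩
  calc wasserstein2 μp μq
      ≤ Real.sqrt (((t₂ - t₁) / (1 - c)) ^ 2
          * ((2 * c * (p - q) ^ 2 + (1 - c) * |p - q|) / (1 + c))) := Real.sqrt_le_sqrt hup
    _ = _ := by rw [Real.sqrt_mul (sq_nonneg _), Real.sqrt_sq hD]

/-- Corollary 2.7: upper and lower bounds for the second Wasserstein distance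
between two self-similar measures. -/
theorem wasserstein2_bounds
    (c t₁ t₂ : ℝ) (hc : c ∈ Set.Ioc (0:ℝ) (1/2))
    (ht₁ : t₁ ∈ Set.Icc (0:ℝ) (1 - 2*c)) (ht₂ : t₂ ∈ Set.Icc (t₁ + c) (1 - c))
    (p q : ℝ) (hp : p ∈ Set.Ioo (0:ℝ) 1) (hq : q ∈ Set.Ioo (0:ℝ) 1) (hpq : p ≠ q)
    (μp : Measure ℝ) (hμp : IsProbabilityMeasure μp)
    (hsuppp : μp ((Set.Icc (0:ℝ) 1)ᶜ) = 0)
    (hssp : μp = ENNReal.ofReal p • μp.map (fun x : ℝ => c * x + t₁)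
               + ENNReal.ofReal (1 - p) • μp.map (fun x : ℝ => c * x + t₂))
    (μq : Measure ℝ) (hμq : IsProbabilityMeasure μq)
    (hsuppq : μq ((Set.Icc (0:ℝ) 1)ᶜ) = 0)
    (hssq : μq = ENNReal.ofReal q • μq.map (fun x : ℝ => c * x + t₁)
               + ENNReal.ofReal (1 - q) • μq.map (fun x : ℝ => c * x + t₂)) :
    (((t₂ - t₁) / (1 - c))^2 * (p - q)^2 ≤ secondMomentInf μp μq ∧
      secondMomentInf μp μq
        ≤ ((t₂ - t₁) / (1 - c))^2 * ((2 * c * (p - q)^2 + (1 - c) * |p - q|) / (1 + c))) ∧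
    ((t₂ - t₁) / (1 - c) * |p - q| ≤ wasserstein2 μp μq ∧
      wasserstein2 μp μq
        ≤ (t₂ - t₁) / (1 - c) *
            Real.sqrt ((2 * c * (p - q)^2 + (1 - c) * |p - q|) / (1 + c))) :=
  wasserstein2_bounds_general c t₁ t₂ hc ht₂ p q hp hq μp hμp hsuppp hssp μq hμq hsuppq hssq
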